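/- arXiv:0706.1886 — 4 statements merged into one kernel-verified Lean document; each statement's English description precedes it below -/
import Mathlib

section
/- Suppose the Hermitian matrix A, matrix T and vectors u, v satisfy T A - A T* = u v* - v u*. Then for any z with z ≠ conj(z) and I - zT, I - conj(z)T* invertible: T(I-zT)^{-1} A (I-conj(z)T*)^{-1} T* = [T(I-zT)^{-1}A - A(I-conj(z)T*)^{-1}T*]/(z - conj(z)) - (I-zT)^{-1} [(u v* - v u*)/(z - conj(z))] (I-conj(z)T*)^{-1}. -/
/-!
Write `E = 1 - z T` and `F = 1 - w S`. Since `T` commutes with `E⁻¹` and `S` with `F⁻¹`,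
conjugating by `E` on the left and `F` on the right turns the claimed identity into
`(z - w) T A S = T A F - E A S - (T A - A S)`, which holds by expanding `E` and `F`.
The theorem is the case `S = Tᴴ`, `w = conj z`, with `T A - A Tᴴ` replaced via the
fundamental identity.
-/

open Matrix

theorem Commute.ringInverse_right {M₀ : Type*} [MonoidWithZero M₀] {a b : M₀}
    (h : Commute a b) : Commute a (Ring.inverse b) := by
  by_cases hb : IsUnit b
  · rw [Ring.inverse_of_isUnit hb]
    exact h.units_inv_right (u := hb.unit)
  · rw [Ring.inverse_non_unit b hb]
    exact Commute.zero_right a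

section Resolvent

variable {K R : Type*} [CommRing K] [Ring R] [Algebra K R]

theorem commute_ringInverse_one_sub_smul (z : K) (T : R) :
    Commute T (Ring.inverse (1 - z • T)) :=
  ((Commute.one_right T).sub_right ((Commute.refl T).smul_right z)).ringInverse_right

theorem sub_smul_mul_ringInverse_mul_mul_ringInverse_mul (z w : K) (T S A : R)
    (hE : IsUnit (1 - z • T)) (hF : IsUnit (1 - w • S)) :
    (z - w) • (T * Ring.inverse (1 - z • T) * A * Ring.inverse (1 - w • S) * S) =
      T * Ring.inverse (1 - z • T) * A - A * Ring.inverse (1 - w • S) * S -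
        Ring.inverse (1 - z • T) * (T * A - A * S) * Ring.inverse (1 - w • S) := by
  set E := 1 - z • T
  set F := 1 - w • S
  have hTE : T * Ring.inverse E = Ring.inverse E * T := commute_ringInverse_one_sub_smul z T
  have hSF : Ring.inverse F * S = S * Ring.inverse F :=
    (commute_ringInverse_one_sub_smul w S).eq.symm
  apply hE.mul_left_cancel
  apply hF.mul_right_cancel
  calc E * (z - w) • (T * Ring.inverse E * A * Ring.inverse F * S) * F
      = (z - w) • (T * A * S) := by
        rw [hTE, mul_assoc _ (Ring.inverse F), hSF]
        simp only [mul_smul_comm, smul_mul_assoc, mul_assoc, Ring.mul_inverse_cancel_left E _ hE,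
          Ring.inverse_mul_cancel F hF, mul_one]
    _ = T * A * F - E * A * S - (T * A - A * S) := by
        simp only [E, F, mul_sub, sub_mul, mul_one, one_mul, mul_smul_comm, smul_mul_assoc,
          mul_assoc]
        module
    _ = E * (T * Ring.inverse E * A - A * Ring.inverse F * S -
          Ring.inverse E * (T * A - A * S) * Ring.inverse F) * F := by
        rw [hTE, mul_assoc A, hSF]
        simp only [mul_sub, sub_mul, mul_assoc, Ring.mul_inverse_cancel_left E _ hE,
          Ring.inverse_mul_cancel F hF, mul_one]

end Resolvent

theorem fmi_transformation_identity_general (n : ℕ)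
    (A T : Matrix (Fin (n + 1)) (Fin (n + 1)) ℂ)
    (u v : Matrix (Fin (n + 1)) (Fin 1) ℂ)
    (hFI : T * A - A * Tᴴ = u * vᴴ - v * uᴴ)
    (z : ℂ) (hz : z ≠ (starRingEnd ℂ) z)
    (h1 : IsUnit (1 - z • T)) (h2 : IsUnit (1 - (starRingEnd ℂ) z • Tᴴ)) :
    T * (1 - z • T)⁻¹ * A * (1 - (starRingEnd ℂ) z • Tᴴ)⁻¹ * Tᴴ =
      (z - (starRingEnd ℂ) z)⁻¹ •
          (T * (1 - z • T)⁻¹ * A - A * (1 - (starRingEnd ℂ) z • Tᴴ)⁻¹ * Tᴴ) -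
        (1 - z • T)⁻¹ * ((z - (starRingEnd ℂ) z)⁻¹ • (u * vᴴ - v * uᴴ)) *
          (1 - (starRingEnd ℂ) z • Tᴴ)⁻¹ := by
  simp only [nonsing_inv_eq_ringInverse]
  rw [← hFI, mul_smul_comm, smul_mul_assoc, ← smul_sub,
    ← sub_smul_mul_ringInverse_mul_mul_ringInverse_mul z _ T Tᴴ A h1 h2,
    inv_smul_smul₀ (sub_ne_zero.mpr hz)]

theorem fmi_transformation_identity (n : ℕ)
    (A T : Matrix (Fin (n + 1)) (Fin (n + 1)) ℂ) (hA : A.IsHermitian)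
    (u v : Matrix (Fin (n + 1)) (Fin 1) ℂ)
    (hFI : T * A - A * Tᴴ = u * vᴴ - v * uᴴ)
    (z : ℂ) (hz : z ≠ (starRingEnd ℂ) z)
    (h1 : IsUnit (1 - z • T)) (h2 : IsUnit (1 - (starRingEnd ℂ) z • Tᴴ)) :
    T * (1 - z • T)⁻¹ * A * (1 - (starRingEnd ℂ) z • Tᴴ)⁻¹ * Tᴴ =
      (z - (starRingEnd ℂ) z)⁻¹ •
          (T * (1 - z • T)⁻¹ * A - A * (1 - (starRingEnd ℂ) z • Tᴴ)⁻¹ * Tᴴ) -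
        (1 - z • T)⁻¹ * ((z - (starRingEnd ℂ) z)⁻¹ • (u * vᴴ - v * uᴴ)) *
          (1 - (starRingEnd ℂ) z • Tᴴ)⁻¹ :=
  fmi_transformation_identity_general n A T u v hFI z hz h1 h2
end

section
/- Let W_w(z) = T(I-zT)^{-1}A - (I-zT)^{-1}u v*(I-zT*)^{-1} + w(z)·(I-zT)^{-1}u u*(I-zT*)^{-1}, where T A - A T* = u v* - v u* and w satisfies the symmetry w(z) = conj(w(conj z)). Then W_w satisfies W_w(z) = (W_w(conj z))*. -/
/-!
Write `R = (1 - zT)⁻¹` and `S = (1 - zT*)⁻¹`. Taking adjoints, with `A = A*` and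
`w(z) = conj (w (conj z))`, turns `W_w(conj z)*` into `A S T* - R v u* S + w(z) R u u* S`,
so the claim reduces to `T R A - A S T* = R (u v* - v u*) S`. This follows from the
displacement equation `T A - A T* = u v* - v u*`, since
`T A - A T* = T A (1 - zT*) - (1 - zT) A T*` and `T` commutes with `R`.
-/

open Matrix

/-- The transformed matrix function `W_w(z)` associated with data `A, T, u, v`
and a scalar function `w`. -/
noncomputable def Ww {n : ℕ} (A T : Matrix (Fin (n + 1)) (Fin (n + 1)) ℂ)
    (u v : Matrix (Fin (n + 1)) (Fin 1) ℂ) (w : ℂ → ℂ) (z : ℂ) :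
    Matrix (Fin (n + 1)) (Fin (n + 1)) ℂ :=
  T * (1 - z • T)⁻¹ * A - (1 - z • T)⁻¹ * u * vᴴ * (1 - z • Tᴴ)⁻¹ +
    w z • ((1 - z • T)⁻¹ * u * uᴴ * (1 - z • Tᴴ)⁻¹)

namespace Matrix

variable {m α : Type*} [Fintype m] [DecidableEq m]

theorem Commute.nonsing_inv_right [CommRing α] {A B : Matrix m m α} (h : Commute A B)
    (hB : IsUnit B) : Commute A B⁻¹ := by
  simpa only [coe_units_inv, IsUnit.unit_spec] using
    (show Commute A hB.unit from h).units_inv_right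

theorem sylvester_inv_one_sub_smul [CommRing α] {T S : Matrix m m α} (A : Matrix m m α)
    {z : α} (hT : IsUnit (1 - z • T)) (hS : IsUnit (1 - z • S)) :
    T * (1 - z • T)⁻¹ * A - A * (1 - z • S)⁻¹ * S =
      (1 - z • T)⁻¹ * (T * A - A * S) * (1 - z • S)⁻¹ := by
  set P := 1 - z • T
  set Q := 1 - z • S
  have hTP : Commute T P⁻¹ :=
    ((Commute.one_right T).sub_right ((Commute.refl T).smul_right z)).nonsing_inv_right hT
  have hSQ : Commute S Q⁻¹ :=
    ((Commute.one_right S).sub_right ((Commute.refl S).smul_right z)).nonsing_inv_right hS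
  have hPdet := (isUnit_iff_isUnit_det P).mp hT
  have hQdet := (isUnit_iff_isUnit_det Q).mp hS
  have displacement : T * A - A * S = T * A * Q - P * A * S := by
    simp only [P, Q, mul_sub, sub_mul, mul_one, one_mul, mul_smul_comm, smul_mul_assoc,
      Matrix.mul_assoc]
    abel
  rw [displacement, Matrix.mul_sub, Matrix.sub_mul]
  simp only [Matrix.mul_assoc, mul_nonsing_inv _ hQdet, mul_one,
    nonsing_inv_mul_cancel_left _ _ hPdet, hSQ.eq]
  rw [← Matrix.mul_assoc T, hTP.eq, Matrix.mul_assoc]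

theorem conjTranspose_inv_one_sub_smul [CommRing α] [StarRing α] (c : α) (T : Matrix m m α) :
    (1 - c • T)⁻¹ᴴ = (1 - star c • Tᴴ)⁻¹ := by
  rw [conjTranspose_nonsing_inv, conjTranspose_sub, conjTranspose_one, conjTranspose_smul]

end Matrix

theorem conjTranspose_Ww {n : ℕ} (A T : Matrix (Fin (n + 1)) (Fin (n + 1)) ℂ)
    (u v : Matrix (Fin (n + 1)) (Fin 1) ℂ) (w : ℂ → ℂ) (z : ℂ) :
    (Ww A T u v w z)ᴴ =
      Aᴴ * (1 - star z • Tᴴ)⁻¹ * Tᴴ - (1 - star z • T)⁻¹ * v * uᴴ * (1 - star z • Tᴴ)⁻¹ +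
        star (w z) • ((1 - star z • T)⁻¹ * u * uᴴ * (1 - star z • Tᴴ)⁻¹) := by
  simp only [Ww, conjTranspose_add, conjTranspose_sub, conjTranspose_smul, conjTranspose_mul,
    conjTranspose_inv_one_sub_smul, conjTranspose_conjTranspose, Matrix.mul_assoc]

theorem Ww_symmetry (n : ℕ)
    (A T : Matrix (Fin (n + 1)) (Fin (n + 1)) ℂ) (hA : A.IsHermitian)
    (u v : Matrix (Fin (n + 1)) (Fin 1) ℂ)
    (hFI : T * A - A * Tᴴ = u * vᴴ - v * uᴴ)
    (w : ℂ → ℂ)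
    (hw : ∀ ζ : ℂ, ζ.im ≠ 0 → w ζ = (starRingEnd ℂ) (w ((starRingEnd ℂ) ζ)))
    (z : ℂ) (hz : z.im ≠ 0)
    (h1 : IsUnit (1 - z • T)) (h2 : IsUnit (1 - (starRingEnd ℂ) z • T)) :
    Ww A T u v w z = (Ww A T u v w ((starRingEnd ℂ) z))ᴴ := by
  have h2' : IsUnit (1 - z • Tᴴ) := by
    simpa [conjTranspose_sub, conjTranspose_smul] using (isUnit_conjTranspose _).mpr h2
  have key := sylvester_inv_one_sub_smul A h1 h2'
  rw [hFI, Matrix.mul_sub, Matrix.sub_mul, sub_eq_iff_eq_add] at key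
  rw [conjTranspose_Ww, hA.eq]
  simp only [Complex.star_def, Complex.conj_conj]
  rw [← hw z hz, Ww, key]
  simp only [Matrix.mul_assoc]
  abel
end

section
/- For the Hamburger data, the matrix W_w(z) is the Hankel matrix with (k,l) entry b_{w,k+l}(z), where b_{w,m}(z) = z^m w(z) + Σ_{j=0}^{m-1} z^{m-1-j} s_j. -/
open Matrix

/-!
As `T` is nilpotent, `(1 - z T)⁻¹ = ∑ zʲ Tʲ` is the lower triangular Toeplitz matrix with entries
`z ^ (a - c)` for `c ≤ a`. Hence `T (1 - z T)⁻¹ A` has entries `∑_{m<k} z^(k-1-m) s_(m+l)`, while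
`(1 - z T)⁻¹ u = (z^k)_k` and `(1 - z T)⁻¹ v = -(∑_{j<l} z^(l-1-j) s_j)_l`, so the two rank-one
terms contribute `z^k ∑_{j<l} z^(l-1-j) s_j + w z^(k+l)`. Splitting the sum defining `b_(k+l)` at `j = l`
gives exactly these three pieces.
-/

open Finset

theorem Finset.sum_range_ite_lt {M : Type*} [AddCommMonoid M] {p N : ℕ} (h : p ≤ N)
    (g : ℕ → M) : ∑ m ∈ range N, (if m < p then g m else 0) = ∑ m ∈ range p, g m := by
  rw [← sum_filter]
  congr 1
  ext m
  simp only [mem_filter, mem_range]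
  omega

theorem Finset.sum_range_add_pow_mul {R : Type*} [CommSemiring R] (z : R) (f : ℕ → R)
    (k l : ℕ) :
    ∑ j ∈ range (k + l), z ^ (k + l - 1 - j) * f j =
      z ^ k * ∑ j ∈ range l, z ^ (l - 1 - j) * f j +
        ∑ m ∈ range k, z ^ (k - 1 - m) * f (m + l) := by
  rw [add_comm k l, sum_range_add, mul_sum]
  congr 1
  · refine sum_congr rfl fun j hj => ?_
    rw [mem_range] at hj
    rw [show l + k - 1 - j = k + (l - 1 - j) by omega, pow_add, mul_assoc]
  · refine sum_congr rfl fun m hm => ?_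
    rw [mem_range] at hm
    rw [show l + k - 1 - (l + m) = k - 1 - m by omega, add_comm l m]

namespace Matrix

def lowerShift (R : Type*) [Zero R] [One R] (N : ℕ) : Matrix (Fin N) (Fin N) R :=
  of fun k l => if (k : ℕ) = l + 1 then 1 else 0

variable {R : Type*} {N : ℕ}

def lowerGeom [Monoid R] [Zero R] (N : ℕ) (z : R) : Matrix (Fin N) (Fin N) R :=
  of fun k l => if (l : ℕ) ≤ k then z ^ ((k : ℕ) - l) else 0

def hankel (N : ℕ) (f : ℕ → R) : Matrix (Fin N) (Fin N) R :=
  of fun k l => f (k + l)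

theorem lowerShift_mul_apply_zero [NonAssocSemiring R] {κ : Type*} (B : Matrix (Fin N) κ R)
    (h : 0 < N) (c : κ) : (lowerShift R N * B) ⟨0, h⟩ c = 0 := by
  simp [lowerShift, mul_apply]

theorem lowerShift_mul_apply_succ [NonAssocSemiring R] {κ : Type*} (B : Matrix (Fin N) κ R)
    {i : ℕ} (h : i + 1 < N) (c : κ) :
    (lowerShift R N * B) ⟨i + 1, h⟩ c = B ⟨i, by omega⟩ c := by
  rw [mul_apply, sum_eq_single ⟨i, by omega⟩]
  · simp [lowerShift]
  · intro m _ hm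
    rw [Ne, Fin.ext_iff] at hm
    rw [lowerShift, of_apply, if_neg (by simp only at hm ⊢; omega), zero_mul]
  · simp

theorem lowerShift_mul_lowerGeom_apply [Semiring R] (z : R) (a c : Fin N) :
    (lowerShift R N * lowerGeom N z) a c = if (c : ℕ) < a then z ^ ((a : ℕ) - 1 - c) else 0 := by
  obtain ⟨_ | i, ha⟩ := a
  · simp only [lowerShift_mul_apply_zero, not_lt_zero, if_false]
  · rw [lowerShift_mul_apply_succ]
    simp only [lowerGeom, of_apply, Nat.lt_add_one_iff, Nat.add_sub_cancel]

theorem one_sub_smul_lowerShift_mul_lowerGeom [Ring R] (z : R) :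
    (1 - z • lowerShift R N) * lowerGeom N z = 1 := by
  ext a c
  rw [sub_mul, smul_mul_assoc, one_mul, sub_apply, smul_apply, lowerShift_mul_lowerGeom_apply,
    lowerGeom, of_apply, one_apply, smul_eq_mul]
  simp only [Fin.ext_iff]
  rcases lt_trichotomy (c : ℕ) a with h | h | h
  · rw [if_pos h.le, if_pos h, if_neg h.ne', ← pow_succ', show (a : ℕ) - 1 - c + 1 = a - c by omega,
      sub_self]
  · simp [h]
  · simp [h.not_ge, h.not_gt, h.ne]

theorem inv_one_sub_smul_lowerShift [CommRing R] (z : R) :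
    (1 - z • lowerShift R N)⁻¹ = lowerGeom N z :=
  inv_eq_right_inv (one_sub_smul_lowerShift_mul_lowerGeom z)

theorem conjTranspose_lowerShift [Semiring R] [StarRing R] :
    (lowerShift R N)ᴴ = (lowerShift R N)ᵀ := by
  ext a c
  simp only [conjTranspose_apply, transpose_apply, lowerShift, of_apply]
  split_ifs <;> simp

theorem inv_one_sub_smul_conjTranspose_lowerShift [CommRing R] [StarRing R] (z : R) :
    (1 - z • (lowerShift R N)ᴴ)⁻¹ = (lowerGeom N z)ᵀ := by
  rw [conjTranspose_lowerShift, ← transpose_one, ← transpose_smul, ← transpose_sub,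
    ← transpose_nonsing_inv, inv_one_sub_smul_lowerShift]

theorem lowerShift_mul_lowerGeom_mul_hankel_apply [Semiring R] (z : R) (f : ℕ → R)
    (k l : Fin N) :
    (lowerShift R N * lowerGeom N z * hankel N f) k l =
      ∑ m ∈ range k, z ^ ((k : ℕ) - 1 - m) * f (m + l) := by
  simp only [mul_apply (M := lowerShift R N * lowerGeom N z), lowerShift_mul_lowerGeom_apply,
    hankel, of_apply, ite_mul, zero_mul]
  exact (Fin.sum_univ_eq_sum_range
    (fun m => if m < k then z ^ ((k : ℕ) - 1 - m) * f (m + l) else 0) N).trans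
    (sum_range_ite_lt k.is_lt.le _)

theorem lowerGeom_mulVec_apply [Semiring R] (z : R) (g : ℕ → R) (a : Fin N) :
    (lowerGeom N z *ᵥ fun m => g m) a = ∑ m ∈ range (a + 1), z ^ ((a : ℕ) - m) * g m := by
  simp only [mulVec, dotProduct, lowerGeom, of_apply, ite_mul, zero_mul, ← Nat.lt_add_one_iff]
  exact (Fin.sum_univ_eq_sum_range
    (fun m => if m < a + 1 then z ^ ((a : ℕ) - m) * g m else 0) N).trans
    (sum_range_ite_lt a.is_lt _)

theorem lowerGeom_mulVec_single_zero_apply [Semiring R] (z : R) (a : Fin N) :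
    (lowerGeom N z *ᵥ fun m => if (m : ℕ) = 0 then 1 else 0) a = z ^ (a : ℕ) := by
  rw [lowerGeom_mulVec_apply z fun m => if m = 0 then 1 else 0, sum_range_succ']
  simp

theorem lowerGeom_mulVec_shift_apply [Semiring R] (z : R) (g : ℕ → R) (a : Fin N) :
    (lowerGeom N z *ᵥ fun m => if (m : ℕ) = 0 then 0 else g (m - 1)) a =
      ∑ j ∈ range a, z ^ ((a : ℕ) - 1 - j) * g j := by
  rw [lowerGeom_mulVec_apply z fun m => if m = 0 then 0 else g (m - 1), sum_range_succ']
  simp only [Nat.add_one_ne_zero, if_false, if_true, Nat.add_sub_cancel, mul_zero, add_zero,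
    Nat.sub_sub, add_comm 1]

theorem mul_replicateCol_mul_replicateRow_mul_transpose_apply {m n ι : Type*} [Fintype n]
    [Fintype ι] [Unique ι] [CommSemiring R] (M : Matrix m n R) (x y : n → R) (k l : m) :
    (M * replicateCol ι x * replicateRow ι y * Mᵀ) k l = (M *ᵥ x) k * (M *ᵥ y) l := by
  rw [← replicateCol_mulVec, Matrix.mul_assoc, ← replicateRow_vecMul, vecMul_transpose]
  simp [mul_apply]

end Matrix

theorem hamburger_Ww_is_hankel_general (n : ℕ)
    (s : ℕ → ℝ)
    (A : Matrix (Fin (n + 1)) (Fin (n + 1)) ℂ)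
    (hA : ∀ k l : Fin (n + 1), A k l = (s ((k : ℕ) + (l : ℕ)) : ℝ))
    (T : Matrix (Fin (n + 1)) (Fin (n + 1)) ℂ)
    (hT : ∀ k l : Fin (n + 1), T k l = if (k : ℕ) = (l : ℕ) + 1 then 1 else 0)
    (u v : Matrix (Fin (n + 1)) (Fin 1) ℂ)
    (hu : ∀ (k : Fin (n + 1)) (i : Fin 1), u k i = if (k : ℕ) = 0 then 1 else 0)
    (hv : ∀ (k : Fin (n + 1)) (i : Fin 1),
      v k i = if (k : ℕ) = 0 then 0 else -(s ((k : ℕ) - 1) : ℝ))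
    (z w : ℂ)
    (W : Matrix (Fin (n + 1)) (Fin (n + 1)) ℂ)
    (hW : W = T * (1 - z • T)⁻¹ * A - (1 - z • T)⁻¹ * u * vᴴ * (1 - z • Tᴴ)⁻¹ +
      w • ((1 - z • T)⁻¹ * u * uᴴ * (1 - z • Tᴴ)⁻¹))
    (b : ℕ → ℂ)
    (hb : ∀ m : ℕ,
      b m = z ^ m * w + ∑ j ∈ Finset.range m, z ^ (m - 1 - j) * (s j : ℝ)) :
    ∀ k l : Fin (n + 1), W k l = b ((k : ℕ) + (l : ℕ)) := by
  have hT' : T = lowerShift ℂ (n + 1) := ext hT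
  have hA' : A = hankel (n + 1) fun m => (s m : ℂ) := ext hA
  have hu' : u = replicateCol (Fin 1) fun k : Fin (n + 1) => if (k : ℕ) = 0 then 1 else 0 := ext hu
  have huH : uᴴ = replicateRow (Fin 1) fun k : Fin (n + 1) => if (k : ℕ) = 0 then 1 else 0 := by
    rw [hu', conjTranspose_replicateCol]
    congr 1
    ext k
    simp [apply_ite star]
  have hvH : vᴴ = replicateRow (Fin 1) fun k : Fin (n + 1) =>
      if (k : ℕ) = 0 then 0 else -(s (k - 1) : ℂ) := by
    ext i k
    rw [conjTranspose_apply, hv, replicateRow_apply]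
    split_ifs <;> simp
  rw [hT', inv_one_sub_smul_lowerShift, inv_one_sub_smul_conjTranspose_lowerShift, hA', huH, hvH,
    hu'] at hW
  intro k l
  rw [hW, Matrix.add_apply, Matrix.sub_apply, Matrix.smul_apply,
    lowerShift_mul_lowerGeom_mul_hankel_apply,
    mul_replicateCol_mul_replicateRow_mul_transpose_apply,
    mul_replicateCol_mul_replicateRow_mul_transpose_apply, lowerGeom_mulVec_single_zero_apply,
    lowerGeom_mulVec_single_zero_apply, lowerGeom_mulVec_shift_apply z (fun j => -(s j : ℂ)), hb,
    sum_range_add_pow_mul]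
  simp only [mul_neg, sum_neg_distrib]
  ring

theorem hamburger_Ww_is_hankel (n : ℕ) (hn : 1 ≤ n)
    (s : ℕ → ℝ)
    (A : Matrix (Fin (n + 1)) (Fin (n + 1)) ℂ)
    (hA : ∀ k l : Fin (n + 1), A k l = (s ((k : ℕ) + (l : ℕ)) : ℝ))
    (T : Matrix (Fin (n + 1)) (Fin (n + 1)) ℂ)
    (hT : ∀ k l : Fin (n + 1), T k l = if (k : ℕ) = (l : ℕ) + 1 then 1 else 0)
    (u v : Matrix (Fin (n + 1)) (Fin 1) ℂ)
    (hu : ∀ (k : Fin (n + 1)) (i : Fin 1), u k i = if (k : ℕ) = 0 then 1 else 0)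
    (hv : ∀ (k : Fin (n + 1)) (i : Fin 1),
      v k i = if (k : ℕ) = 0 then 0 else -(s ((k : ℕ) - 1) : ℝ))
    (z w : ℂ)
    (W : Matrix (Fin (n + 1)) (Fin (n + 1)) ℂ)
    (hW : W = T * (1 - z • T)⁻¹ * A - (1 - z • T)⁻¹ * u * vᴴ * (1 - z • Tᴴ)⁻¹ +
      w • ((1 - z • T)⁻¹ * u * uᴴ * (1 - z • Tᴴ)⁻¹))
    (b : ℕ → ℂ)
    (hb : ∀ m : ℕ,
      b m = z ^ m * w + ∑ j ∈ Finset.range m, z ^ (m - 1 - j) * (s j : ℝ)) :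
    ∀ k l : Fin (n + 1), W k l = b ((k : ℕ) + (l : ℕ)) :=
  hamburger_Ww_is_hankel_general n s A hA T hT u v hu hv z w W hW b hb
end

section
/- The matrix identity [[I, (conj(z)-z)u],[0,1]] · [[(I-zT)A(I-conj(z)T*), u w - v],[conj(w)u* - v*, (w - conj(w))/(z - conj z)]] · [[I, 0],[(z - conj z)u*, 1]] = [[(I-conj(z)T)A(I-zT*), u conj(w) - v],[w u* - v*, (w - conj(w))/(z - conj z)]] holds, given the Fundamental Identity T A - A T* = u v* - v u*. -/
/-!
Multiplying out the block conjugation leaves the off-diagonal and corner blocks to cancellations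
of the scalar `(w - w̄) / (z - z̄)` against `z - z̄`, while the top-left block becomes
`(1 - zT) A (1 - z̄T*) + (z - z̄) (u v* - v u*)`. The Fundamental Identity replaces
`u v* - v u*` by `T A - A T*`, and exchanging `z` and `z̄` in `(1 - zT) A (1 - z̄T*)` changes it
by exactly `(z - z̄) (T A - A T*)`.
-/

open Matrix ComplexConjugate

theorem Matrix.fromBlocks_one_mul_mul_fromBlocks_one {l m α : Type*} [Fintype l] [Fintype m]
    [DecidableEq l] [DecidableEq m] [Semiring α] (X : Matrix l m α) (Y : Matrix m l α)
    (A : Matrix l l α) (B : Matrix l m α) (C : Matrix m l α) (D : Matrix m m α) :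
    fromBlocks 1 X 0 1 * fromBlocks A B C D * fromBlocks 1 0 Y 1 =
      fromBlocks (A + X * C + (B + X * D) * Y) (B + X * D) (C + D * Y) D := by
  simp [fromBlocks_multiply, Matrix.add_mul, Matrix.mul_assoc]

theorem one_sub_smul_mul_mul_one_sub_smul_swap {S R : Type*} [CommRing S] [Ring R]
    [Algebra S R] (a b : S) (X Y A : R) :
    (1 - a • X) * A * (1 - b • Y) + (a - b) • (X * A - A * Y) =
      (1 - b • X) * A * (1 - a • Y) := by
  simp only [sub_mul, mul_sub, one_mul, mul_one, smul_mul_assoc, mul_smul_comm, mul_assoc]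
  module

theorem Complex.sub_conj_ne_zero {z : ℂ} (hz : z.im ≠ 0) : z - conj z ≠ 0 := by
  simp [Complex.sub_conj, hz]

theorem fmi_conjugation_identity_general (n : ℕ)
    (A T : Matrix (Fin n) (Fin n) ℂ)
    (u v : Matrix (Fin n) (Fin 1) ℂ)
    (hFI : T * A - A * Tᴴ = u * vᴴ - v * uᴴ)
    (z : ℂ) (hz : z.im ≠ 0) (w : ℂ) :
    Matrix.fromBlocks (1 : Matrix (Fin n) (Fin n) ℂ) (((starRingEnd ℂ) z - z) • u) 0
        (1 : Matrix (Fin 1) (Fin 1) ℂ) *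
      Matrix.fromBlocks ((1 - z • T) * A * (1 - (starRingEnd ℂ) z • Tᴴ)) (w • u - v)
        ((starRingEnd ℂ) w • uᴴ - vᴴ)
        (((w - (starRingEnd ℂ) w) / (z - (starRingEnd ℂ) z)) • (1 : Matrix (Fin 1) (Fin 1) ℂ)) *
      Matrix.fromBlocks (1 : Matrix (Fin n) (Fin n) ℂ) 0 ((z - (starRingEnd ℂ) z) • uᴴ)
        (1 : Matrix (Fin 1) (Fin 1) ℂ) =
    Matrix.fromBlocks ((1 - (starRingEnd ℂ) z • T) * A * (1 - z • Tᴴ))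
      ((starRingEnd ℂ) w • u - v) (w • uᴴ - vᴴ)
      (((w - (starRingEnd ℂ) w) / (z - (starRingEnd ℂ) z)) • (1 : Matrix (Fin 1) (Fin 1) ℂ)) := by
  set s := (w - conj w) / (z - conj z)
  have hs : (z - conj z) * s = w - conj w := mul_div_cancel₀ _ (Complex.sub_conj_ne_zero hz)
  have hB : w • u - v + ((conj z - z) • u) * (s • (1 : Matrix (Fin 1) (Fin 1) ℂ)) = conj w • u - v := by
    rw [Matrix.smul_mul, Matrix.mul_smul, Matrix.mul_one, smul_smul,
      show (conj z - z) * s = conj w - w by linear_combination -hs]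
    module
  have hC : conj w • uᴴ - vᴴ + (s • (1 : Matrix (Fin 1) (Fin 1) ℂ)) * ((z - conj z) • uᴴ) = w • uᴴ - vᴴ := by
    rw [Matrix.smul_mul, Matrix.mul_smul, Matrix.one_mul, smul_smul, mul_comm, hs]
    module
  have hTopLeft : (1 - z • T) * A * (1 - conj z • Tᴴ) + ((conj z - z) • u) * (conj w • uᴴ - vᴴ)
      + (conj w • u - v) * ((z - conj z) • uᴴ) = (1 - conj z • T) * A * (1 - z • Tᴴ) := by
    rw [← one_sub_smul_mul_mul_one_sub_smul_swap, hFI]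
    simp only [Matrix.mul_sub, Matrix.sub_mul, Matrix.smul_mul, Matrix.mul_smul]
    module
  rw [Matrix.fromBlocks_one_mul_mul_fromBlocks_one, hB, hC, hTopLeft]

theorem fmi_conjugation_identity (n : ℕ)
    (A T : Matrix (Fin n) (Fin n) ℂ) (hA : A.IsHermitian)
    (u v : Matrix (Fin n) (Fin 1) ℂ)
    (hFI : T * A - A * Tᴴ = u * vᴴ - v * uᴴ)
    (z : ℂ) (hz : z.im ≠ 0) (w : ℂ) :
    Matrix.fromBlocks (1 : Matrix (Fin n) (Fin n) ℂ) (((starRingEnd ℂ) z - z) • u) 0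
        (1 : Matrix (Fin 1) (Fin 1) ℂ) *
      Matrix.fromBlocks ((1 - z • T) * A * (1 - (starRingEnd ℂ) z • Tᴴ)) (w • u - v)
        ((starRingEnd ℂ) w • uᴴ - vᴴ)
        (((w - (starRingEnd ℂ) w) / (z - (starRingEnd ℂ) z)) • (1 : Matrix (Fin 1) (Fin 1) ℂ)) *
      Matrix.fromBlocks (1 : Matrix (Fin n) (Fin n) ℂ) 0 ((z - (starRingEnd ℂ) z) • uᴴ)
        (1 : Matrix (Fin 1) (Fin 1) ℂ) =
    Matrix.fromBlocks ((1 - (starRingEnd ℂ) z • T) * A * (1 - z • Tᴴ))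
      ((starRingEnd ℂ) w • u - v) (w • uᴴ - vᴴ)
      (((w - (starRingEnd ℂ) w) / (z - (starRingEnd ℂ) z)) • (1 : Matrix (Fin 1) (Fin 1) ℂ)) :=
  fmi_conjugation_identity_general n A T u v hFI z hz w
end
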